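/- arXiv:1702.05037 — 4 statements merged into one kernel-verified Lean document; each statement's English description precedes it below -/
import Mathlib

section
/- Let d, M be positive integers and I = {1,…,M}. There exists a subset S ⊆ I^d with |S| ≥ (M/4)^{d/2} such that any two distinct elements u, v ∈ S have Hamming distance H(u,v) ≥ d/2 (indeed > ⌈d/2⌉). -/
/-! A maximal family of words at pairwise Hamming distance `> r` is an `r`-covering of `[M]^d`.
A Hamming ball of radius `r ≤ d` has at most `C(d, r) M^r ≤ 2^d M^r` points, so such a family
has at least `M^d / (2^d M^r)` members. For `r = ⌊(d - 1)/2⌋` we have `2r ≤ d < 2(r + 1)`, so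
the distances are `≥ d/2` and the family has at least `M^(d/2) / 2^d = (M/4)^(d/2)` members. -/

open Finset

theorem exists_pairwise_not_rel_covering {α : Type*} [Fintype α] (R : α → α → Prop)
    (hsymm : ∀ x y, R x y → R y x) (hrefl : ∀ x, R x x) :
    ∃ S : Finset α, (S : Set α).Pairwise (fun u v => ¬ R u v) ∧
      ∀ x, ∃ s ∈ S, R x s := by
  classical
  obtain ⟨S, hS, hmax⟩ := (univ.filter fun S : Finset α =>
    (S : Set α).Pairwise (fun u v => ¬ R u v)).exists_max_image card ⟨∅, by simp⟩
  rw [mem_filter] at hS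
  refine ⟨S, hS.2, fun x => ?_⟩
  by_contra! hfar
  have hx : x ∉ S := fun hx => hfar x hx (hrefl x)
  have hins : insert x S ∈ univ.filter fun S : Finset α =>
      (S : Set α).Pairwise (fun u v => ¬ R u v) := by
    rw [mem_filter, coe_insert, Set.pairwise_insert]
    exact ⟨mem_univ _, hS.2, fun s hs _ => ⟨hfar s hs, fun h => hfar s hs (hsymm s x h)⟩⟩
  have := hmax _ hins
  rw [card_insert_of_notMem hx] at this
  omega

section Hamming

variable {ι α : Type*} [Fintype ι] [DecidableEq ι] [Fintype α] [DecidableEq α]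

theorem card_filter_forall_notMem_eq (T : Finset ι) (s : ι → α) :
    #{x : ι → α | ∀ j ∉ T, x j = s j} = Fintype.card α ^ #T := by
  have : ({x : ι → α | ∀ j ∉ T, x j = s j} : Finset _) =
      Fintype.piFinset fun j => if j ∈ T then univ else {s j} := by
    ext x
    simp only [mem_filter, mem_univ, true_and, Fintype.mem_piFinset]
    refine forall_congr' fun j => ?_
    split_ifs with hj <;> simp [hj]
  simp only [this, Fintype.card_piFinset, apply_ite card, card_univ, card_singleton]
  rw [prod_ite_mem, univ_inter, prod_const]

theorem card_filter_hammingDist_le_le {r : ℕ} (hr : r ≤ Fintype.card ι) (s : ι → α) :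
    #{x : ι → α | hammingDist x s ≤ r} ≤
      (Fintype.card ι).choose r * Fintype.card α ^ r := by
  have hcover : ({x : ι → α | hammingDist x s ≤ r} : Finset _) ⊆
      (powersetCard r univ).biUnion fun T => {x | ∀ j ∉ T, x j = s j} := by
    intro x hx
    rw [mem_filter] at hx
    obtain ⟨T, hDT, -, hT⟩ := exists_subsuperset_card_eq (subset_univ {j | x j ≠ s j}) hx.2
      (by rwa [card_univ])
    refine mem_biUnion.2 ⟨T, mem_powersetCard.2 ⟨subset_univ T, hT⟩,
      mem_filter.2 ⟨mem_univ x, fun j hj => ?_⟩⟩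
    by_contra hne
    exact hj (hDT (mem_filter.2 ⟨mem_univ j, hne⟩))
  calc #{x : ι → α | hammingDist x s ≤ r}
      ≤ #((powersetCard r univ).biUnion fun T => {x : ι → α | ∀ j ∉ T, x j = s j}) :=
        card_le_card hcover
    _ ≤ #(powersetCard r (univ : Finset ι)) * Fintype.card α ^ r :=
        card_biUnion_le_card_mul _ _ _ fun T hT => by
          rw [card_filter_forall_notMem_eq, (mem_powersetCard.1 hT).2]
    _ = (Fintype.card ι).choose r * Fintype.card α ^ r := by rw [card_powersetCard, card_univ]

theorem exists_hammingDist_packing {r : ℕ} (hr : r ≤ Fintype.card ι) :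
    ∃ S : Finset (ι → α), (S : Set (ι → α)).Pairwise (fun u v => r < hammingDist u v) ∧
      Fintype.card α ^ Fintype.card ι ≤
        #S * ((Fintype.card ι).choose r * Fintype.card α ^ r) := by
  obtain ⟨S, hsep, hnet⟩ :=
    exists_pairwise_not_rel_covering (fun x y : ι → α => hammingDist x y ≤ r)
    (fun x y h => (hammingDist_comm y x).trans_le h) (fun x => by simp)
  refine ⟨S, fun u hu v hv huv => not_le.1 (hsep hu hv huv), ?_⟩
  have hunion : (univ : Finset (ι → α)) ⊆ S.biUnion fun s => {x | hammingDist x s ≤ r} := by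
    intro x _
    obtain ⟨s, hs, hxs⟩ := hnet x
    exact mem_biUnion.2 ⟨s, hs, mem_filter.2 ⟨mem_univ x, hxs⟩⟩
  calc Fintype.card α ^ Fintype.card ι = #(univ : Finset (ι → α)) := by simp
    _ ≤ #(S.biUnion fun s => {x : ι → α | hammingDist x s ≤ r}) := card_le_card hunion
    _ ≤ _ := card_biUnion_le_card_mul _ _ _ fun s _ => card_filter_hammingDist_le_le hr s

end Hamming

theorem div_four_rpow_half_le {m c d r : ℕ} (hm : 1 ≤ m) (hrd : 2 * r ≤ d)
    (h : m ^ d ≤ c * (2 ^ d * m ^ r)) : ((m : ℝ) / 4) ^ ((d : ℝ) / 2) ≤ c := by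
  have hm' : (1 : ℝ) ≤ m := by exact_mod_cast hm
  have h4 : (4 : ℝ) ^ ((d : ℝ) / 2) = 2 ^ d := by
    rw [show (4 : ℝ) = 2 ^ (2 : ℝ) by norm_num, ← Real.rpow_mul (by norm_num),
      mul_div_cancel₀ _ two_ne_zero, Real.rpow_natCast]
  have hexp : (m : ℝ) ^ ((d : ℝ) / 2) * (m : ℝ) ^ r ≤ (m : ℝ) ^ d := by
    rw [← Real.rpow_natCast _ r, ← Real.rpow_add (by positivity), ← Real.rpow_natCast _ d]
    apply Real.rpow_le_rpow_of_exponent_le hm'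
    have : (2 * r : ℝ) ≤ d := by exact_mod_cast hrd
    linarith
  rw [Real.div_rpow (by positivity) (by norm_num), h4, div_le_iff₀ (by positivity)]
  refine le_of_mul_le_mul_right ?_ (by positivity : (0 : ℝ) < m ^ r)
  calc (m : ℝ) ^ ((d : ℝ) / 2) * m ^ r ≤ m ^ d := hexp
    _ ≤ c * (2 ^ d * m ^ r) := by exact_mod_cast h
    _ = c * 2 ^ d * m ^ r := by ring

theorem varshamov_gilbert_packing_general (d M : ℕ) (hM : 0 < M) :
    ∃ S : Finset (Fin d → Fin M),
      ((M : ℝ) / 4) ^ ((d : ℝ) / 2) ≤ (S.card : ℝ) ∧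
      ∀ u ∈ S, ∀ v ∈ S, u ≠ v → (d : ℝ) / 2 ≤ (hammingDist u v : ℝ) := by
  obtain ⟨S, hsep, hcard⟩ := exists_hammingDist_packing (ι := Fin d) (α := Fin M)
    (r := (d - 1) / 2) (by rw [Fintype.card_fin]; omega)
  rw [Fintype.card_fin, Fintype.card_fin] at hcard
  refine ⟨S, div_four_rpow_half_le hM (by omega : 2 * ((d - 1) / 2) ≤ d) ?_,
    fun u hu v hv huv => ?_⟩
  · exact hcard.trans (Nat.mul_le_mul_left _ (Nat.mul_le_mul_right _ (Nat.choose_le_two_pow _ _)))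
  · have hfar := hsep hu hv huv
    rw [div_le_iff₀ two_pos]
    exact_mod_cast (by omega : d ≤ hammingDist u v * 2)

/-- Varshamov–Gilbert-type packing lemma: for positive integers `d, M` there is a subset
`S ⊆ {1,…,M}^d` with `|S| ≥ (M/4)^{d/2}` whose distinct elements are at Hamming distance
at least `d/2` from each other. -/
theorem varshamov_gilbert_packing (d M : ℕ) (hd : 0 < d) (hM : 0 < M) :
    ∃ S : Finset (Fin d → Fin M),
      ((M : ℝ) / 4) ^ ((d : ℝ) / 2) ≤ (S.card : ℝ) ∧
      ∀ u ∈ S, ∀ v ∈ S, u ≠ v → (d : ℝ) / 2 ≤ (hammingDist u v : ℝ) :=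
  varshamov_gilbert_packing_general d M hM
end

section
/- Let Λ be a probability measure on [0,1] with density λ bounded below by b₁ > 0 and above by b₂. Let κ ≥ 0 be an integer and let φ_κ be the degree-κ orthonormal polynomial (with positive leading coefficient a_κ) obtained by Gram–Schmidt on 1, t, …, t^κ in L²(Λ). Define Φ_{κ,0}(t) = φ_κ(t)λ(t) and Φ_{κ,ℓ+1}(t) = ∫₀^t Φ_{κ,ℓ}(u) du. Then Φ_{κ,ℓ}(1) = 0 for ℓ = 1,…,κ, and Φ_{κ,κ+1}(1) = (−1)^κ/(a_κ·κ!). -/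
open MeasureTheory Set Polynomial

/-!
Fubini over the triangle `0 ≤ u ≤ s ≤ t` gives Cauchy's formula
`Φ_{κ,n+1}(t) = ∫₀ᵗ (t - u)ⁿ / n! · Φ_{κ,0}(u) du`, so at `t = 1`,
`Φ_{κ,n+1}(1) = (-1)ⁿ / n! · ⟨φ_κ, (X - 1)ⁿ⟩`. For `n < κ` this vanishes by orthogonality.
For `n = κ`, `(X - 1)^κ - φ_κ / a_κ` has degree `< κ`, so
`⟨φ_κ, (X - 1)^κ⟩ = ⟨φ_κ, φ_κ⟩ / a_κ = 1 / a_κ`.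
-/

theorem integral_sub_pow_div_factorial (n : ℕ) (u t : ℝ) :
    ∫ s in u..t, (s - u) ^ n / (n.factorial : ℝ) = (t - u) ^ (n + 1) / ((n + 1).factorial : ℝ) := by
  rw [intervalIntegral.integral_div, intervalIntegral.integral_comp_sub_right (· ^ n), sub_self,
    integral_pow, Nat.factorial_succ]
  push_cast
  field_simp
  ring

section RepeatedIntegral

variable {E : Type*} [NormedAddCommGroup E] [NormedSpace ℝ E]

theorem integral_integral_swap_triangle {g : ℝ → E} {k : ℝ → ℝ → ℝ} {a t : ℝ} (hat : a ≤ t)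
    (hg : IntegrableOn g (Ioc a t)) (hk : Continuous (Function.uncurry k)) :
    ∫ s in a..t, ∫ u in a..s, k s u • g u = ∫ u in a..t, ∫ s in u..t, k s u • g u := by
  set F : ℝ × ℝ → E := {z | z.2 ≤ z.1}.indicator fun z => k z.1 z.2 • g z.2
  have hF : Integrable F ((volume.restrict (Ioc a t)).prod (volume.restrict (Ioc a t))) := by
    obtain ⟨C, hC⟩ := (isCompact_Icc.prod isCompact_Icc).exists_bound_of_continuousOn
      (hk.continuousOn (s := Icc a t ×ˢ Icc a t))
    refine Integrable.mono' ((hg.norm.comp_snd _).const_mul C) ?_ ?_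
    · exact ((hk.aestronglyMeasurable).smul hg.aestronglyMeasurable.comp_snd).indicator
        (measurableSet_le measurable_snd measurable_fst)
    · rw [Measure.prod_restrict, ae_restrict_iff' (measurableSet_Ioc.prod measurableSet_Ioc)]
      refine .of_forall fun z hz => (norm_indicator_le_norm_self _ _).trans ?_
      rw [norm_smul]
      exact mul_le_mul_of_nonneg_right
        (hC z ⟨Ioc_subset_Icc_self hz.1, Ioc_subset_Icc_self hz.2⟩) (norm_nonneg _)
  have hF_fst : ∀ s u, F (s, u) = (Iic s).indicator (fun u => k s u • g u) u := fun s u => by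
    simp only [F, indicator_apply, mem_ofPred_eq, mem_Iic]
  have hF_snd : ∀ s u, F (s, u) = (Ici u).indicator (fun s => k s u • g u) s := fun s u => by
    simp only [F, indicator_apply, mem_ofPred_eq, mem_Ici]
  calc ∫ s in a..t, ∫ u in a..s, k s u • g u
      = ∫ s in Ioc a t, ∫ u in Ioc a t, F (s, u) := by
        rw [intervalIntegral.integral_of_le hat]
        refine setIntegral_congr_fun measurableSet_Ioc fun s hs => ?_
        rw [intervalIntegral.integral_of_le hs.1.le]
        simp only [hF_fst, setIntegral_indicator measurableSet_Iic,
          Ioc_inter_Iic, min_eq_right hs.2]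
    _ = ∫ u in Ioc a t, ∫ s in Ioc a t, F (s, u) := integral_integral_swap hF
    _ = ∫ u in a..t, ∫ s in u..t, k s u • g u := by
        rw [intervalIntegral.integral_of_le hat]
        refine setIntegral_congr_fun measurableSet_Ioc fun u hu => ?_
        rw [intervalIntegral.integral_of_le hu.2]
        have hIcc : Ioc a t ∩ Ici u = Icc u t := by
          ext s
          simp only [mem_inter_iff, mem_Ioc, mem_Ici, mem_Icc]
          exact ⟨fun h => ⟨h.2, h.1.2⟩, fun h => ⟨⟨hu.1.trans_le h.1, h.2⟩, h.1⟩⟩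
        simp only [hF_snd, setIntegral_indicator measurableSet_Ici, hIcc,
          integral_Icc_eq_integral_Ioc]

theorem repeated_integral_eq_integral_sub_pow_smul [CompleteSpace E] {Φ : ℕ → ℝ → E} {a T : ℝ}
    (hΦ0 : IntegrableOn (Φ 0) (Ioc a T)) (hΦ : ∀ n t, Φ (n + 1) t = ∫ u in a..t, Φ n u) :
    ∀ n, ∀ t ∈ Icc a T, Φ (n + 1) t = ∫ u in a..t, ((t - u) ^ n / (n.factorial : ℝ)) • Φ 0 u
  | 0, t, _ => by simp [hΦ]
  | n + 1, t, ht => by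
    have ih := repeated_integral_eq_integral_sub_pow_smul hΦ0 hΦ n
    calc Φ (n + 2) t = ∫ s in a..t, Φ (n + 1) s := hΦ _ _
      _ = ∫ s in a..t, ∫ u in a..s, ((s - u) ^ n / (n.factorial : ℝ)) • Φ 0 u :=
        intervalIntegral.integral_congr fun s hs => by
          rw [uIcc_of_le ht.1] at hs
          exact ih s ⟨hs.1, hs.2.trans ht.2⟩
      _ = ∫ u in a..t, ∫ s in u..t, ((s - u) ^ n / (n.factorial : ℝ)) • Φ 0 u :=
        integral_integral_swap_triangle ht.1 (hΦ0.mono_set (Ioc_subset_Ioc_right ht.2))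
          (by fun_prop)
      _ = ∫ u in a..t, ((t - u) ^ (n + 1) / ((n + 1).factorial : ℝ)) • Φ 0 u := by
        simp only [intervalIntegral.integral_smul_const, integral_sub_pow_div_factorial]

end RepeatedIntegral

theorem Polynomial.natDegree_X_sub_C_pow {R : Type*} [CommRing R] [Nontrivial R] (r : R) (n : ℕ) :
    ((X - C r) ^ n).natDegree = n := by
  rw [(monic_X_sub_C r).natDegree_pow, natDegree_X_sub_C, mul_one]

theorem Polynomial.linearMap_eq_coeff_div_leadingCoeff_mul {K : Type*} [Field K]
    (B : K[X] →ₗ[K] K) {p : K[X]} (hp : p ≠ 0)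
    (horth : ∀ q : K[X], q.degree < p.natDegree → B q = 0) {q : K[X]}
    (hq : q.natDegree ≤ p.natDegree) :
    B q = q.coeff p.natDegree / p.leadingCoeff * B p := by
  set c := q.coeff p.natDegree / p.leadingCoeff
  have hdeg : (q - c • p).degree < p.natDegree := by
    rw [degree_lt_iff_coeff_zero]
    intro m hm
    rw [coeff_sub, coeff_smul, smul_eq_mul]
    rcases hm.eq_or_lt with rfl | hlt
    · rw [coeff_natDegree, div_mul_cancel₀ _ (leadingCoeff_ne_zero.mpr hp), sub_self]
    · rw [coeff_eq_zero_of_natDegree_lt (hq.trans_lt hlt), coeff_eq_zero_of_natDegree_lt hlt,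
        mul_zero, sub_zero]
  have := horth _ hdeg
  rwa [map_sub, map_smul, smul_eq_mul, sub_eq_zero] at this

@[simps]
noncomputable def Polynomial.intervalIntegralEvalMul {a b : ℝ} {w : ℝ → ℝ}
    (hw : IntervalIntegrable w volume a b) : ℝ[X] →ₗ[ℝ] ℝ where
  toFun q := ∫ t in a..b, q.eval t * w t
  map_add' q r := by
    simp only [eval_add, add_mul]
    exact intervalIntegral.integral_add (hw.continuousOn_mul q.continuousOn)
      (hw.continuousOn_mul r.continuousOn)
  map_smul' c q := by
    simp only [eval_smul, smul_eq_mul, mul_assoc, intervalIntegral.integral_const_mul,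
      RingHom.id_apply]

theorem ortho_poly_iterated_integral_boundary_general (κ : ℕ) (b₁ b₂ : ℝ)
    (lam : ℝ → ℝ) (hmeas : Measurable lam)
    (hlow : ∀ t ∈ Set.Icc (0:ℝ) 1, b₁ ≤ lam t)
    (hhigh : ∀ t ∈ Set.Icc (0:ℝ) 1, lam t ≤ b₂)
    (p : Polynomial ℝ) (hdeg : p.natDegree = κ) (hlead : 0 < p.leadingCoeff)
    (hnorm : ∫ t in (0:ℝ)..1, (p.eval t) ^ 2 * lam t = 1)
    (horth : ∀ q : Polynomial ℝ, q.degree < (κ : WithBot ℕ) →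
      ∫ t in (0:ℝ)..1, p.eval t * q.eval t * lam t = 0)
    (Φ : ℕ → ℝ → ℝ)
    (hΦ0 : ∀ t, Φ 0 t = p.eval t * lam t)
    (hΦs : ∀ ℓ t, Φ (ℓ + 1) t = ∫ u in (0:ℝ)..t, Φ ℓ u) :
    (∀ ℓ, 1 ≤ ℓ → ℓ ≤ κ → Φ ℓ 1 = 0) ∧
    Φ (κ + 1) 1 = (-1) ^ κ / (p.leadingCoeff * (κ.factorial : ℝ)) := by
  subst hdeg
  have hlam : IntegrableOn lam (Icc 0 1) :=
    Measure.integrableOn_of_bounded measure_Icc_lt_top.ne hmeas.aestronglyMeasurable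
      ((ae_restrict_iff' measurableSet_Icc).mpr
        (.of_forall fun t ht => abs_le_max_abs_abs (hlow t ht) (hhigh t ht)))
  have hf : IntegrableOn (Φ 0) (Icc 0 1) := by
    simpa only [← funext hΦ0] using hlam.continuousOn_mul p.continuousOn isCompact_Icc
  let B := intervalIntegralEvalMul
    ((intervalIntegrable_iff_integrableOn_Icc_of_le zero_le_one).mpr hf)
  have hB : ∀ q, B q = ∫ t in (0:ℝ)..1, p.eval t * q.eval t * lam t := fun q =>
    intervalIntegral.integral_congr fun t _ => by simp only [hΦ0]; ring
  have hΦ1 : ∀ n, Φ (n + 1) 1 = (-1) ^ n / (n.factorial : ℝ) * B ((X - C 1) ^ n) := fun n => by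
    rw [repeated_integral_eq_integral_sub_pow_smul (hf.mono_set Ioc_subset_Icc_self) hΦs n 1
      ⟨zero_le_one, le_rfl⟩, intervalIntegralEvalMul_apply, ← intervalIntegral.integral_const_mul]
    refine intervalIntegral.integral_congr fun u _ => ?_
    simp only [smul_eq_mul, eval_pow, eval_sub, eval_X, eval_C, show 1 - u = -1 * (u - 1) by ring,
      mul_pow]
    ring
  refine ⟨fun ℓ hℓ hℓκ => ?_, ?_⟩
  · obtain ⟨n, rfl⟩ := Nat.exists_eq_add_of_le' hℓ
    have hdeg : ((X - C (1:ℝ)) ^ n).degree < (p.natDegree : WithBot ℕ) :=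
      degree_le_natDegree.trans_lt
        (by exact_mod_cast (natDegree_X_sub_C_pow (1:ℝ) n).trans_lt hℓκ)
    rw [hΦ1, hB, horth _ hdeg, mul_zero]
  · have hp : p ≠ 0 := leadingCoeff_ne_zero.mp hlead.ne'
    have hcoeff : ((X - C (1:ℝ)) ^ p.natDegree).coeff p.natDegree = 1 := by
      simpa only [natDegree_X_sub_C_pow] using
        ((monic_X_sub_C (1:ℝ)).pow p.natDegree).coeff_natDegree
    have hBp : B p = 1 := (hB p).trans (by simpa only [sq] using hnorm)
    rw [hΦ1, linearMap_eq_coeff_div_leadingCoeff_mul B hp (fun q hq => (hB q).trans (horth q hq))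
      (natDegree_X_sub_C_pow 1 _).le, hBp, hcoeff]
    field_simp

/-- Boundary values of iterated antiderivatives of an orthonormal polynomial times the
density: `Φ_{κ,ℓ}(1) = 0` for `ℓ = 1,…,κ` and `Φ_{κ,κ+1}(1) = (−1)^κ/(a_κ κ!)`. -/
theorem ortho_poly_iterated_integral_boundary (κ : ℕ) (b₁ b₂ : ℝ)
    (hb₁ : 0 < b₁) (hb : b₁ ≤ b₂)
    (lam : ℝ → ℝ) (hmeas : Measurable lam)
    (hlow : ∀ t ∈ Set.Icc (0:ℝ) 1, b₁ ≤ lam t)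
    (hhigh : ∀ t ∈ Set.Icc (0:ℝ) 1, lam t ≤ b₂)
    (p : Polynomial ℝ) (hdeg : p.natDegree = κ) (hlead : 0 < p.leadingCoeff)
    (hnorm : ∫ t in (0:ℝ)..1, (p.eval t) ^ 2 * lam t = 1)
    (horth : ∀ q : Polynomial ℝ, q.degree < (κ : WithBot ℕ) →
      ∫ t in (0:ℝ)..1, p.eval t * q.eval t * lam t = 0)
    (Φ : ℕ → ℝ → ℝ)
    (hΦ0 : ∀ t, Φ 0 t = p.eval t * lam t)
    (hΦs : ∀ ℓ t, Φ (ℓ + 1) t = ∫ u in (0:ℝ)..t, Φ ℓ u) :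
    (∀ ℓ, 1 ≤ ℓ → ℓ ≤ κ → Φ ℓ 1 = 0) ∧
    Φ (κ + 1) 1 = (-1) ^ κ / (p.leadingCoeff * (κ.factorial : ℝ)) :=
  ortho_poly_iterated_integral_boundary_general κ b₁ b₂ lam hmeas hlow hhigh p hdeg hlead hnorm
    horth Φ hΦ0 hΦs
end

section
/- Let k ≥ 0 and d ≥ 1 be integers with n = kd, and let V : ℝ^{n×kd} be the matrix whose i-th row is (X^i_1, (X^i_1)², …, (X^i_1)^k, …, X^i_d, …, (X^i_d)^k) for input points X^i ∈ [0,1]^d. Then the determinant of V, viewed as a polynomial in the nd entries X^i_j, is not identically zero; in particular, there exists an assignment of inputs for which V is invertible. Consequently, if the X^i are drawn i.i.d. from a continuous distribution on [0,1]^d and n ≥ kd, then V has full column rank almost surely. -/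
/-!
The determinant of `V` is a polynomial in the inputs. It is not the zero polynomial: placing
the points `α_ℓ • e_j` (with `α_ℓ = 1/(ℓ+1)` distinct and nonzero) in the rows indexed by
`(j, ℓ)` makes `V = I_d ⊗ diag(α) · Vandermonde(α)`, whose determinant is nonzero. The zero set
of a nonzero real polynomial is Lebesgue-null (Fubini on the leading coefficient in one
variable, by induction on the number of variables), and this is inherited by the law of `n`
i.i.d. points with a density. Off that null set, some `kd × kd` minor of `V` is invertible, so
`V` has full column rank.
-/

open MeasureTheory MvPolynomial
open scoped Kronecker

theorem MvPolynomial.volume_setOf_eval_eq_zero_fin :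
    ∀ {N : ℕ} {p : MvPolynomial (Fin N) ℝ}, p ≠ 0 → volume {x | eval x p = 0} = 0
  | 0, p, hp => by
    obtain ⟨c, rfl⟩ := C_surjective (Fin 0) p
    simp_all
  | N + 1, p, hp => by
    set q := finSuccEquiv ℝ N p
    have hq : q.leadingCoeff ≠ 0 :=
      Polynomial.leadingCoeff_ne_zero.mpr ((map_ne_zero_iff _ (finSuccEquiv ℝ N).injective).mpr hp)
    have hlead : ∀ᵐ y : Fin N → ℝ, eval y q.leadingCoeff ≠ 0 := by
      simpa [ae_iff] using volume_setOf_eval_eq_zero_fin hq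
    have hslice : ∀ y : Fin N → ℝ, eval y q.leadingCoeff ≠ 0 →
        volume {a : ℝ | eval (Fin.cons a y) p = 0} = 0 := by
      intro y hy
      have hmap : q.map (eval y) ≠ 0 := fun h => hy <| by
        simpa using congrArg (Polynomial.coeff · q.natDegree) h
      simpa [eval_eq_eval_mv_eval', q] using
        (Polynomial.finite_setOfPred_isRoot hmap).measure_zero volume
    set S := {z : ℝ × (Fin N → ℝ) | eval (Fin.cons z.1 z.2) p = 0}
    have hS : MeasurableSet S :=
      measurableSet_eq_fun ((continuous_eval p).measurable.comp (by fun_prop)) measurable_const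
    have hpre : {x : Fin (N + 1) → ℝ | eval x p = 0} =
        MeasurableEquiv.piFinSuccAbove (fun _ => ℝ) 0 ⁻¹' S := by
      ext x
      simp [S]
    rw [hpre, (volume_preserving_piFinSuccAbove (fun _ => ℝ) 0).measure_preimage
      hS.nullMeasurableSet, Measure.volume_eq_prod, Measure.prod_apply_symm hS]
    exact (lintegral_congr_ae (hlead.mono hslice)).trans lintegral_zero

section AddHaar

variable {E : Type*} [NormedAddCommGroup E] [NormedSpace ℝ E] [MeasurableSpace E] [BorelSpace E] (μ : Measure E) [μ.IsAddHaarMeasure]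

theorem ContinuousLinearEquiv.addHaar_preimage_eq_zero {F : Type*} [NormedAddCommGroup F]
    [NormedSpace ℝ F] [FiniteDimensional ℝ F] [MeasurableSpace F] [BorelSpace F]
    (L : E ≃L[ℝ] F) (ν : Measure F) [ν.IsAddHaarMeasure] {s : Set F} (hs : ν s = 0) :
    μ (L ⁻¹' s) = 0 := by
  have : (μ.map L).IsAddHaarMeasure := L.isAddHaarMeasure_map μ
  calc μ (L ⁻¹' s) = μ.map L s := (L.toHomeomorph.toMeasurableEquiv.map_apply s).symm
    _ = 0 := Measure.absolutelyContinuous_isAddHaarMeasure _ ν hs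

theorem MvPolynomial.ae_eval_ne_zero {σ : Type*} [Fintype σ] (L : E ≃L[ℝ] (σ → ℝ))
    {p : MvPolynomial σ ℝ} (hp : p ≠ 0) : ∀ᵐ x ∂μ, eval (L x) p ≠ 0 := by
  let e := Fintype.equivFin σ
  have hp' : rename e p ≠ 0 := (map_ne_zero_iff _ (rename_injective _ e.injective)).mpr hp
  have := (L.trans (LinearEquiv.funCongrLeft ℝ ℝ e.symm).toContinuousLinearEquiv)
    |>.addHaar_preimage_eq_zero μ volume (volume_setOf_eval_eq_zero_fin hp')
  rw [ae_iff]
  simpa [eval_rename, Function.comp_def] using this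

end AddHaar

theorem MeasureTheory.Measure.AbsolutelyContinuous.pi :
    ∀ {m : ℕ} {α : Fin m → Type*} [∀ i, MeasurableSpace (α i)] {μ ν : ∀ i, Measure (α i)}
      [∀ i, SigmaFinite (μ i)] [∀ i, SigmaFinite (ν i)], (∀ i, μ i ≪ ν i) →
      Measure.pi μ ≪ Measure.pi ν
  | 0, _, _, μ, ν, _, _, _ => by
    rw [Measure.pi_of_empty μ, Measure.pi_of_empty ν]
  | m + 1, _, _, μ, ν, _, _, h => by
    rw [← (measurePreserving_piFinSuccAbove μ 0).symm.map_eq,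
      ← (measurePreserving_piFinSuccAbove ν 0).symm.map_eq]
    exact ((h 0).prod (pi fun i => h _)).map (MeasurableEquiv.measurable _)

theorem Matrix.rank_eq_card_width_of_det_submatrix_ne_zero {m n R : Type*} [Fintype n]
    [DecidableEq n] [CommRing R] [IsDomain R] (A : Matrix m n R) (r : n → m)
    (h : (A.submatrix r id).det ≠ 0) : A.rank = Fintype.card n :=
  (rank_le_card_width A).antisymm
    ((rank_of_det_ne_zero h).symm.le.trans (rank_submatrix_le A r id))

/-- The matrix `V` of the paper, for points `X i` with coordinates indexed by `κ`. -/
def coordPowMatrix {ι κ R : Type*} [Monoid R] (k : ℕ) (X : ι → κ → R) :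
    Matrix ι (κ × Fin k) R :=
  Matrix.of fun i c => X i c.1 ^ ((c.2 : ℕ) + 1)

section CoordPowMatrix

variable {κ : Type*} [DecidableEq κ] {k : ℕ}

theorem coordPowMatrix_single_eq_kronecker {R : Type*} [CommRing R] (α : Fin k → R) :
    coordPowMatrix k (fun c : κ × Fin k => Pi.single c.1 (α c.2)) =
      (1 : Matrix κ κ R) ⊗ₖ (Matrix.diagonal α * Matrix.vandermonde α) := by
  ext ⟨j, ℓ⟩ ⟨j', ℓ'⟩
  by_cases hj : j = j'
  · subst hj
    simp [coordPowMatrix, pow_succ']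
  · simp [coordPowMatrix, hj, Pi.single_apply, Ne.symm hj]

variable [Fintype κ]

theorem det_coordPowMatrix_single_ne_zero {R : Type*} [CommRing R] [IsDomain R]
    {α : Fin k → R} (hα : Function.Injective α) (hα0 : ∀ ℓ, α ℓ ≠ 0) :
    (coordPowMatrix k (fun c : κ × Fin k => Pi.single c.1 (α c.2))).det ≠ 0 := by
  rw [coordPowMatrix_single_eq_kronecker, Matrix.det_kronecker, Matrix.det_mul,
    Matrix.det_diagonal]
  simp [Finset.prod_ne_zero_iff, hα0, Matrix.det_vandermonde_ne_zero_iff.mpr hα]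

variable (κ k) in
theorem exists_coordPowMatrix_det_ne_zero :
    ∃ X : κ × Fin k → κ → ℝ, (∀ c j, X c j ∈ Set.Icc (0 : ℝ) 1) ∧
      (coordPowMatrix k X).det ≠ 0 := by
  let α : Fin k → ℝ := fun ℓ => ((ℓ : ℝ) + 1)⁻¹
  have hα : Function.Injective α := fun a b h => by simpa [α, Fin.val_inj] using h
  refine ⟨fun c => Pi.single c.1 (α c.2), fun c j => ?_,
    det_coordPowMatrix_single_ne_zero hα fun ℓ => by positivity⟩
  rcases eq_or_ne j c.1 with rfl | hj
  · simp only [Pi.single_eq_same, α]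
    exact ⟨by positivity, inv_le_one_of_one_le₀ (by simp)⟩
  · simp [hj]

theorem ae_det_coordPowMatrix_submatrix_ne_zero {ι : Type*} [Fintype ι] (r : κ × Fin k ↪ ι) :
    ∀ᵐ X : ι → κ → ℝ, ((coordPowMatrix k X).submatrix r id).det ≠ 0 := by
  let P : MvPolynomial (ι × κ) ℝ :=
    ((coordPowMatrix k fun i j => X (i, j)).submatrix r id).det
  have heval : ∀ X : ι → κ → ℝ,
      eval (fun q => X q.1 q.2) P = ((coordPowMatrix k X).submatrix r id).det := by
    intro X
    rw [RingHom.map_det]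
    congr 1
    ext
    simp [coordPowMatrix]
  have hP : P ≠ 0 := by
    obtain ⟨W, -, hW⟩ := exists_coordPowMatrix_det_ne_zero κ k
    have hsub : (coordPowMatrix k (Function.extend r W 0)).submatrix r id =
        coordPowMatrix k W := by
      ext
      simp [coordPowMatrix, r.injective.extend_apply]
    intro h
    exact hW (by simpa [h, hsub] using (heval (Function.extend r W 0)).symm)
  let uncurry : (ι → κ → ℝ) ≃ₗ[ℝ] (ι × κ → ℝ) :=
    { (Equiv.curry ι κ ℝ).symm with map_add' := fun _ _ => rfl, map_smul' := fun _ _ => rfl }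
  filter_upwards [ae_eval_ne_zero volume uncurry.toContinuousLinearEquiv hP] with X hX
  rwa [← heval]

end CoordPowMatrix

theorem vandermonde_basis_generic_rank_general (k d : ℕ)
    (n : ℕ) (hn : k * d ≤ n) (μ : Measure (Fin d → ℝ)) [IsProbabilityMeasure μ]
    (hac : μ ≪ volume) :
    (∀ e : Fin (k * d) ≃ Fin d × Fin k,
      ∃ X : Fin (k * d) → Fin d → ℝ,
        (∀ i j, X i j ∈ Set.Icc (0:ℝ) 1) ∧
        (Matrix.of fun (i : Fin (k * d)) (c : Fin (k * d)) =>
          X i (e c).1 ^ (((e c).2 : ℕ) + 1)).det ≠ 0) ∧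
    ∀ᵐ X ∂(Measure.pi fun _ : Fin n => μ),
      (Matrix.of fun (i : Fin n) (c : Fin d × Fin k) =>
        X i c.1 ^ ((c.2 : ℕ) + 1)).rank = k * d := by
  refine ⟨fun e => ?_, ?_⟩
  · obtain ⟨W, hW01, hW⟩ := exists_coordPowMatrix_det_ne_zero (Fin d) k
    exact ⟨W ∘ e, fun i => hW01 (e i), by rwa [← Matrix.det_submatrix_equiv_self e] at hW⟩
  · obtain ⟨r⟩ : Nonempty (Fin d × Fin k ↪ Fin n) :=
      Function.Embedding.nonempty_of_card_le (by simpa [mul_comm] using hn)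
    filter_upwards [Measure.AbsolutelyContinuous.pi (fun _ => hac)
      (ae_det_coordPowMatrix_submatrix_ne_zero r)] with X hX
    exact (Matrix.rank_eq_card_width_of_det_submatrix_ne_zero (coordPowMatrix k X) r hX).trans
      (by simp [mul_comm])

/-- The determinant of the blockwise-Vandermonde polynomial basis matrix is not identically
zero (witnessed by some inputs in `[0,1]^d`), and for i.i.d. draws from a continuous
distribution on `[0,1]^d` with `n ≥ kd` the matrix has full column rank almost surely. -/
theorem vandermonde_basis_generic_rank (k d : ℕ) (hk : 0 < k) (hd : 0 < d)
    (n : ℕ) (hn : k * d ≤ n) (μ : Measure (Fin d → ℝ)) [IsProbabilityMeasure μ]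
    (hac : μ ≪ volume) :
    (∀ e : Fin (k * d) ≃ Fin d × Fin k,
      ∃ X : Fin (k * d) → Fin d → ℝ,
        (∀ i j, X i j ∈ Set.Icc (0:ℝ) 1) ∧
        (Matrix.of fun (i : Fin (k * d)) (c : Fin (k * d)) =>
          X i (e c).1 ^ (((e c).2 : ℕ) + 1)).det ≠ 0) ∧
    ∀ᵐ X ∂(Measure.pi fun _ : Fin n => μ),
      (Matrix.of fun (i : Fin n) (c : Fin d × Fin k) =>
        X i c.1 ^ ((c.2 : ℕ) + 1)).rank = k * d :=
  vandermonde_basis_generic_rank_general k d n hn μ hac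
end

section
/- Let f_j = Σ_{ℓ=1}^n α_j^ℓ h_ℓ be a linear combination of the k-th order falling factorial basis functions with knots t¹ < ⋯ < tⁿ. Then the k-th derivative of f_j satisfies f_j^{(k)}(t) = k!·α^{k+1} + k!·Σ_{ℓ=k+2}^n α^ℓ·1{t > t^{ℓ−1}} (piecewise constant), and hence the total variation of f_j^{(k)} equals k!·Σ_{ℓ=k+2}^n |α^ℓ|. -/
/-!
Near a point `x` that is not a knot, each basis function is a locally constant factor times a
product of at most `k` linear factors `y - t ℓ`, so `f` agrees near `x` with a polynomial of
degree at most `k`, whose `k`-th derivative is the constant `k!` times its `k`-th coefficient.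
Exactly the basis functions with `k` linear factors contribute, each with its frozen indicator.

The derivative is then a jump function `c + ∑ aᵢ 1{τᵢ < x}`. Its variation is at most `∑ |aᵢ|`
by subadditivity, since each indicator is monotone with values in `[0, 1]`; when the knots `τᵢ`
increase strictly, sampling it at the knots themselves (and once beyond the last one) passes
every jump separately, which gives the reverse inequality.
-/

open Finset Set Filter Topology Polynomial

open scoped Nat

theorem Polynomial.iterate_derivative_of_natDegree_le {R : Type*} [Semiring R] {p : R[X]} {k : ℕ}
    (hp : p.natDegree ≤ k) : derivative^[k] p = C (k ! * p.coeff k) := by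
  have hconst : (derivative^[k] p).natDegree ≤ 0 :=
    (natDegree_iterate_derivative p k).trans (by omega)
  rw [eq_C_of_natDegree_le_zero hconst, coeff_iterate_derivative, zero_add,
    Nat.descFactorial_self, nsmul_eq_mul]

theorem Polynomial.iteratedDeriv_eval {𝕜 : Type*} [NontriviallyNormedField 𝕜] (p : 𝕜[X]) (n : ℕ) :
    iteratedDeriv n (fun x => p.eval x) = fun x => (derivative^[n] p).eval x := by
  induction n generalizing p with
  | zero => simp
  | succ n ih =>
    have hderiv : _root_.deriv (fun x => p.eval x) = fun x => p.derivative.eval x :=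
      _root_.funext fun _ => p.deriv
    rw [iteratedDeriv_succ', hderiv, ih, Function.iterate_succ_apply]

theorem eventually_lt_iff_of_ne {a x : ℝ} (hx : x ≠ a) : ∀ᶠ y in 𝓝 x, a < y ↔ a < x := by
  rcases hx.lt_or_gt with hlt | hgt
  · filter_upwards [gt_mem_nhds hlt] with y hy
    exact iff_of_false hy.not_gt hlt.not_gt
  · filter_upwards [lt_mem_nhds hgt] with y hy
    exact iff_of_true hy hgt

noncomputable section

def fallingFactorialBasis (k : ℕ) (t : ℕ → ℝ) (m : ℕ) (x : ℝ) : ℝ :=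
  if m < k + 1 then ∏ ℓ ∈ Finset.range m, (x - t ℓ)
  else (∏ ℓ ∈ Finset.Ico (m - k) m, (x - t ℓ)) * (if t (m - 1) < x then 1 else 0)

/-- Since `m - k` truncates to `0` when `m ≤ k`, these are the root sets of all basis functions. -/
def fallingFactorialPoly (k : ℕ) (t : ℕ → ℝ) (m : ℕ) : ℝ[X] :=
  ∏ ℓ ∈ Ico (m - k) m, (X - C (t ℓ))

def knotFactor (k : ℕ) (t : ℕ → ℝ) (m : ℕ) (x : ℝ) : ℝ :=
  if m < k + 1 then 1 else if t (m - 1) < x then 1 else 0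

end

theorem fallingFactorialBasis_eq (k : ℕ) (t : ℕ → ℝ) (m : ℕ) (x : ℝ) :
    fallingFactorialBasis k t m x = knotFactor k t m x * (fallingFactorialPoly k t m).eval x := by
  unfold fallingFactorialBasis knotFactor fallingFactorialPoly
  split_ifs with hm
  · rw [Nat.sub_eq_zero_of_le (by omega), ← range_eq_Ico]
    simp [eval_prod]
  all_goals simp [eval_prod]

theorem natDegree_fallingFactorialPoly (k : ℕ) (t : ℕ → ℝ) (m : ℕ) :
    (fallingFactorialPoly k t m).natDegree = min m k := by
  rw [fallingFactorialPoly, natDegree_prod_of_monic _ _ fun ℓ _ => monic_X_sub_C _]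
  simp only [natDegree_X_sub_C, sum_const, Nat.card_Ico, smul_eq_mul, mul_one]
  omega

theorem coeff_fallingFactorialPoly (k : ℕ) (t : ℕ → ℝ) (m : ℕ) :
    (fallingFactorialPoly k t m).coeff k = if k ≤ m then 1 else 0 := by
  have hdeg := natDegree_fallingFactorialPoly k t m
  split_ifs with hkm
  · have hmonic : (fallingFactorialPoly k t m).Monic :=
      monic_prod_of_monic _ _ fun ℓ _ => monic_X_sub_C _
    rw [← hmonic.coeff_natDegree, hdeg, min_eq_right hkm]
  · exact coeff_eq_zero_of_natDegree_lt (by omega)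

theorem eventually_knotFactor_eq {k : ℕ} {t : ℕ → ℝ} {m : ℕ} {x : ℝ} (hx : x ≠ t (m - 1)) :
    ∀ᶠ y in 𝓝 x, knotFactor k t m y = knotFactor k t m x := by
  filter_upwards [eventually_lt_iff_of_ne hx] with y hy
  simp only [knotFactor, hy]

theorem iteratedDeriv_sum_fallingFactorialBasis {k n : ℕ} {t : ℕ → ℝ} (hkn : k < n)
    (α : ℕ → ℝ) {x : ℝ} (hx : ∀ m < n, x ≠ t m) :
    iteratedDeriv k (fun y => ∑ m ∈ range n, α m * fallingFactorialBasis k t m y) x =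
      k ! * α k + k ! * ∑ m ∈ Ico (k + 1) n, α m * (if t (m - 1) < x then 1 else 0) := by
  set Q : ℝ[X] := ∑ m ∈ range n, C (α m * knotFactor k t m x) * fallingFactorialPoly k t m
  have hlocal : (fun y => ∑ m ∈ range n, α m * fallingFactorialBasis k t m y) =ᶠ[𝓝 x]
      fun y => Q.eval y := by
    have hfrozen := (eventually_all_finset (range n)).2 fun m hm =>
      eventually_knotFactor_eq (k := k) (t := t) (hx (m - 1) (by grind))
    filter_upwards [hfrozen] with y hy
    simp only [Q, eval_finsetSum, eval_mul, eval_C, fallingFactorialBasis_eq]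
    exact sum_congr rfl fun m hm => by rw [hy m hm]; ring
  have hdeg : Q.natDegree ≤ k := natDegree_sum_le_of_forall_le _ _ fun m _ =>
    (natDegree_C_mul_le _ _).trans
      ((natDegree_fallingFactorialPoly k t m).trans_le (min_le_right _ _))
  rw [hlocal.iteratedDeriv_eq, iteratedDeriv_eval, iterate_derivative_of_natDegree_le hdeg]
  simp only [eval_C, Q, finsetSum_coeff, coeff_C_mul, coeff_fallingFactorialPoly, mul_ite, mul_one,
    mul_zero]
  rw [← sum_filter, show (range n).filter (k ≤ ·) = Finset.Ico k n by ext; grind,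
    sum_eq_sum_Ico_succ_bot hkn, mul_add, knotFactor, if_pos (lt_add_one k), mul_one]
  congr 2
  exact sum_congr rfl fun m hm => by
    rw [knotFactor, if_neg (by grind), mul_ite, mul_one, mul_zero]

namespace eVariationOn

variable {α : Type*} [LinearOrder α] {E : Type*} [SeminormedAddCommGroup E]

theorem const (c : E) (s : Set α) : eVariationOn (fun _ => c) s = 0 :=
  constant_on (subsingleton_singleton.anti (image_subset_iff.2 fun _ _ => rfl))

theorem add_le (f g : α → E) (s : Set α) :
    eVariationOn (f + g) s ≤ eVariationOn f s + eVariationOn g s := by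
  refine iSup_le fun ⟨n, u, hu, us⟩ => ?_
  calc ∑ i ∈ range n, edist ((f + g) (u (i + 1))) ((f + g) (u i))
      ≤ ∑ i ∈ range n, (edist (f (u (i + 1))) (f (u i)) + edist (g (u (i + 1))) (g (u i))) :=
        sum_le_sum fun i _ => edist_add_add_le _ _ _ _
    _ ≤ eVariationOn f s + eVariationOn g s := by
        rw [sum_add_distrib]
        exact add_le_add (sum_le hu us) (sum_le hu us)

theorem finset_sum_le {ι : Type*} (t : Finset ι) (f : ι → α → E) (s : Set α) :
    eVariationOn (∑ i ∈ t, f i) s ≤ ∑ i ∈ t, eVariationOn (f i) s :=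
  le_sum_of_subadditive (fun g : α → E => eVariationOn g s) (const (0 : E) s).le
    (fun f g => add_le f g s) t f

end eVariationOn

theorem MonotoneOn.eVariationOn_le_of_mapsTo {α : Type*} [LinearOrder α] {f : α → ℝ}
    {s : Set α} {a b : ℝ} (hf : MonotoneOn f s) (hab : MapsTo f s (Icc a b)) :
    eVariationOn f s ≤ ENNReal.ofReal (b - a) := by
  rw [eVariationOn.eq_biSup_inter_Icc]
  refine iSup₂_le fun p ⟨hp₁, hp₂, _⟩ => ?_
  rw [hf.eVariationOn_eq hp₁ hp₂]
  exact ENNReal.ofReal_le_ofReal (sub_le_sub (hab hp₂).2 (hab hp₁).1)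

theorem eVariationOn_const_mul_ite_lt_le (c a : ℝ) (s : Set ℝ) :
    eVariationOn (fun x => c * if a < x then 1 else 0) s ≤ ‖c‖ₑ := by
  have hmono : Monotone fun x => if a < x then (1 : ℝ) else 0 := by
    intro x y hxy
    simp only
    split_ifs <;> linarith
  have hind : eVariationOn (fun x => if a < x then (1 : ℝ) else 0) s ≤ 1 := by
    simpa using (hmono.monotoneOn s).eVariationOn_le_of_mapsTo (a := 0) (b := 1)
      fun x _ => by split_ifs <;> norm_num
  calc eVariationOn (fun x => c * if a < x then 1 else 0) s
      ≤ ‖c‖ₑ * eVariationOn (fun x => if a < x then (1 : ℝ) else 0) s +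
          1 * eVariationOn (fun _ => c) s :=
        eVariation_mul_le (f := fun _ => c) (fun _ _ => le_rfl)
          (fun x _ => by split_ifs <;> simp)
    _ ≤ ‖c‖ₑ := by
        rw [eVariationOn.const, mul_zero, add_zero]
        exact mul_le_of_le_one_right' hind

noncomputable section

def jumpFunction (c : ℝ) (a τ : ℕ → ℝ) (N : ℕ) (x : ℝ) : ℝ :=
  c + ∑ i ∈ range N, a i * if τ i < x then 1 else 0

end

theorem eVariationOn_jumpFunction_le (c : ℝ) (a τ : ℕ → ℝ) (N : ℕ) :
    eVariationOn (jumpFunction c a τ N) univ ≤ ENNReal.ofReal (∑ i ∈ range N, |a i|) := by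
  have hsplit : jumpFunction c a τ N =
      (fun _ => c) + ∑ i ∈ range N, fun x => a i * if τ i < x then 1 else 0 := by
    ext x; simp [jumpFunction]
  calc eVariationOn (jumpFunction c a τ N) univ
      ≤ eVariationOn (fun _ => c) univ +
          ∑ i ∈ range N, eVariationOn (fun x => a i * if τ i < x then 1 else 0) univ := by
        rw [hsplit]
        exact (eVariationOn.add_le _ _ _).trans
          (by gcongr; exact eVariationOn.finset_sum_le _ _ _)
    _ ≤ ∑ i ∈ range N, ‖a i‖ₑ := by
        rw [eVariationOn.const, zero_add]
        exact sum_le_sum fun i _ => eVariationOn_const_mul_ite_lt_le _ _ _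
    _ = ENNReal.ofReal (∑ i ∈ range N, |a i|) := by
        simp only [Real.enorm_eq_ofReal_abs]
        exact (ENNReal.ofReal_sum_of_nonneg fun i _ => abs_nonneg _).symm

theorem jumpFunction_eq_add_sum_range {c : ℝ} {a τ : ℕ → ℝ} {N j : ℕ} {x : ℝ} (hj : j ≤ N)
    (hx : ∀ i < N, τ i < x ↔ i < j) :
    jumpFunction c a τ N x = c + ∑ i ∈ range j, a i := by
  have hbelow : ∑ i ∈ range j, a i * (if τ i < x then 1 else 0) = ∑ i ∈ range j, a i :=
    sum_congr rfl fun i hi => by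
      have hij := mem_range.1 hi
      rw [if_pos ((hx i (hij.trans_le hj)).2 hij), mul_one]
  have habove : ∑ i ∈ Ico j N, a i * (if τ i < x then 1 else 0) = 0 :=
    sum_eq_zero fun i hi => by
      obtain ⟨hji, hiN⟩ := mem_Ico.1 hi
      rw [if_neg fun h => hji.not_gt ((hx i hiN).1 h), mul_zero]
  rw [jumpFunction, ← sum_range_add_sum_Ico _ hj, hbelow, habove, add_zero]

theorem le_eVariationOn_jumpFunction (c : ℝ) (a : ℕ → ℝ) {τ : ℕ → ℝ} {N : ℕ}
    (hτ : StrictMonoOn τ (Set.Iio N)) :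
    ENNReal.ofReal (∑ i ∈ range N, |a i|) ≤ eVariationOn (jumpFunction c a τ N) univ := by
  set u : ℕ → ℝ := fun j => if j < N then τ j else τ (N - 1) + 1
  have hτ_le_last : ∀ i < N, τ i ≤ τ (N - 1) := fun i hi =>
    hτ.monotoneOn hi (show N - 1 < N by omega) (by omega)
  have hu : ∀ j ≤ N, ∀ i < N, τ i < u j ↔ i < j := by
    intro j hj i hi
    rcases hj.lt_or_eq with hj | rfl
    · simpa [u, hj] using hτ.lt_iff_lt hi hj
    · simp only [u, lt_irrefl, if_false]
      exact iff_of_true ((hτ_le_last i hi).trans_lt (lt_add_one _)) hi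
  have hmono : MonotoneOn u (Set.Icc 0 N) := by
    intro j hj j' hj' hjj'
    rcases hjj'.lt_or_eq with hlt | rfl
    · rcases hj'.2.lt_or_eq with hj'N | rfl
      · simpa [u, hj'N, hlt.trans hj'N] using hτ.monotoneOn (hlt.trans hj'N) hj'N hlt.le
      · simpa [u, hlt] using (hτ_le_last j hlt).trans (le_add_of_nonneg_right zero_le_one)
    · exact le_rfl
  calc ENNReal.ofReal (∑ i ∈ range N, |a i|)
      = ∑ i ∈ Ico 0 N,
          edist (jumpFunction c a τ N (u (i + 1))) (jumpFunction c a τ N (u i)) := by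
        rw [ENNReal.ofReal_sum_of_nonneg fun i _ => abs_nonneg _, range_eq_Ico]
        refine sum_congr rfl fun i hi => ?_
        have hiN := (mem_Ico.1 hi).2
        rw [jumpFunction_eq_add_sum_range hiN (hu (i + 1) hiN),
          jumpFunction_eq_add_sum_range hiN.le (hu i hiN.le), sum_range_succ, edist_dist,
          Real.dist_eq, add_sub_add_left_eq_sub, add_sub_cancel_left]
    _ ≤ eVariationOn (jumpFunction c a τ N) univ :=
        eVariationOn.sum_le_of_monotoneOn_Icc hmono fun _ _ => mem_univ _

theorem eVariationOn_jumpFunction (c : ℝ) (a : ℕ → ℝ) {τ : ℕ → ℝ} {N : ℕ}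
    (hτ : StrictMonoOn τ (Set.Iio N)) :
    eVariationOn (jumpFunction c a τ N) univ = ENNReal.ofReal (∑ i ∈ range N, |a i|) :=
  (eVariationOn_jumpFunction_le c a τ N).antisymm (le_eVariationOn_jumpFunction c a hτ)

/-- For a linear combination `f = ∑ₘ αₘ hₘ` of `k`-th order falling factorial basis
functions with knots `t₀ < t₁ < ⋯ < t_{n-1}`, away from the knots the `k`-th derivative
is the piecewise-constant function
`D(x) = k!·α_k + k!·∑_{m=k+1}^{n-1} αₘ·1{x > t_{m-1}}`, and the total variation of `D`
equals `k!·∑_{m=k+1}^{n-1} |αₘ|`. -/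
theorem falling_factorial_deriv_and_tv (k n : ℕ) (hn : k + 1 ≤ n)
    (t : ℕ → ℝ) (ht : ∀ i j : ℕ, i < j → j < n → t i < t j)
    (α : ℕ → ℝ) :
    let h : ℕ → ℝ → ℝ := fun m x =>
      if m < k + 1 then ∏ ℓ ∈ Finset.range m, (x - t ℓ)
      else (∏ ℓ ∈ Finset.Ico (m - k) m, (x - t ℓ)) * (if t (m - 1) < x then 1 else 0)
    let f : ℝ → ℝ := fun x => ∑ m ∈ Finset.range n, α m * h m x
    let D : ℝ → ℝ := fun x =>
      (k.factorial : ℝ) * α k +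
        (k.factorial : ℝ) *
          ∑ m ∈ Finset.Ico (k + 1) n, α m * (if t (m - 1) < x then 1 else 0)
    (∀ x : ℝ, (∀ m < n, x ≠ t m) → iteratedDeriv k f x = D x) ∧
    eVariationOn D Set.univ =
      ENNReal.ofReal ((k.factorial : ℝ) * ∑ m ∈ Finset.Ico (k + 1) n, |α m|) := by
  intro h f D
  refine ⟨fun x hx => iteratedDeriv_sum_fallingFactorialBasis hn α hx, ?_⟩
  have hD : D = jumpFunction (k ! * α k) (fun i => k ! * α (k + 1 + i)) (fun i => t (k + i))
      (n - (k + 1)) := by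
    ext x
    simp only [D, jumpFunction, mul_sum, sum_Ico_eq_sum_range, mul_assoc,
      show ∀ i, k + 1 + i - 1 = k + i by omega]
  have hknots : StrictMonoOn (fun i => t (k + i)) (Set.Iio (n - (k + 1))) :=
    fun i _ j hj hij => ht _ _ (by omega) (by grind)
  rw [hD, eVariationOn_jumpFunction _ _ hknots, sum_Ico_eq_sum_range, mul_sum]
  simp only [abs_mul, Nat.abs_cast]
end
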